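/- arXiv:2412.03066 — 3 statements merged into one kernel-verified Lean document; each statement's English description precedes it below -/
import Mathlib

section
/- If H is a convex subgraph of a graph G and X is a total mutual-visibility set of G, then X ∩ V(H) is a total mutual-visibility set of H. -/
open SimpleGraph

variable {V : Type*}

/-- Vertices `u` and `v` are `X`-visible in `G`: some shortest `u,v`-walk has
no internal vertex in `X`. -/
def XVisible (G : SimpleGraph V) (X : Set V) (u v : V) : Prop :=
  ∃ p : G.Walk u v, p.length = G.dist u v ∧
    ∀ w ∈ p.support, w ≠ u → w ≠ v → w ∉ X

/-- `X` is a mutual-visibility set of `G`. -/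
def MutualVis (G : SimpleGraph V) (X : Set V) : Prop :=
  ∀ ⦃u⦄, u ∈ X → ∀ ⦃v⦄, v ∈ X → XVisible G X u v

/-- `X` is a total mutual-visibility set of `G`. -/
def TotalVis (G : SimpleGraph V) (X : Set V) : Prop :=
  ∀ u v : V, XVisible G X u v

/-- `X` is a dual mutual-visibility set of `G`. -/
def DualVis (G : SimpleGraph V) (X : Set V) : Prop :=
  MutualVis G X ∧ ∀ ⦃u⦄, u ∉ X → ∀ ⦃v⦄, v ∉ X → XVisible G X u v

/-- `X` is an outer mutual-visibility set of `G`. -/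
def OuterVis (G : SimpleGraph V) (X : Set V) : Prop :=
  MutualVis G X ∧ ∀ ⦃u⦄, u ∈ X → ∀ ⦃v⦄, v ∉ X → XVisible G X u v

/-- `S` induces a convex subgraph of `G`. -/
def IsConvexSet (G : SimpleGraph V) (S : Set V) : Prop :=
  ∀ u ∈ S, ∀ v ∈ S, ∀ p : G.Walk u v, p.length = G.dist u v →
    ∀ w ∈ p.support, w ∈ S

/-- The cycle graph on `ZMod n`. -/
def cyc (n : ℕ) : SimpleGraph (ZMod n) :=
  SimpleGraph.fromRel (fun u v => u - v = 1)

namespace SimpleGraph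

variable {G : SimpleGraph V} {s : Set V}

@[simp]
lemma Walk.length_induce {u v : V} (p : G.Walk u v) (hp : ∀ x ∈ p.support, x ∈ s) :
    (p.induce s hp).length = p.length := by
  induction p with
  | nil => rfl
  | cons _ _ ih => simp [ih]

lemma dist_le_dist_induce {u v : s} (h : (G.induce s).Reachable u v) :
    G.dist u v ≤ (G.induce s).dist u v := by
  obtain ⟨q, hq⟩ := h.exists_walk_length_eq_dist
  calc G.dist u v ≤ (q.map (Embedding.induce s).toHom).length := G.dist_le _
    _ = (G.induce s).dist u v := by rw [Walk.length_map, hq]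

lemma Walk.length_induce_eq_dist {u v : V} (p : G.Walk u v) (hp : ∀ x ∈ p.support, x ∈ s)
    (hpd : p.length = G.dist u v) :
    (p.induce s hp).length =
      (G.induce s).dist ⟨u, hp u p.start_mem_support⟩ ⟨v, hp v p.end_mem_support⟩ :=
  le_antisymm (by simpa [hpd] using dist_le_dist_induce ⟨p.induce s hp⟩) (dist_le _)

end SimpleGraph

open SimpleGraph in
lemma XVisible.induce_of_isConvexSet {G : SimpleGraph V} {S X : Set V} (hS : IsConvexSet G S)
    {u v : V} (hu : u ∈ S) (hv : v ∈ S) (h : XVisible G X u v) :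
    XVisible (G.induce S) (Subtype.val ⁻¹' X) ⟨u, hu⟩ ⟨v, hv⟩ := by
  obtain ⟨p, hpd, hpX⟩ := h
  have hpS := hS u hu v hv p hpd
  refine ⟨p.induce S hpS, p.length_induce_eq_dist hpS hpd, fun w hw hwu hwv => ?_⟩
  rw [Walk.support_induce, List.mem_attachWith] at hw
  exact hpX w hw (fun h => hwu (Subtype.ext h)) (fun h => hwv (Subtype.ext h))

theorem stmt_4 (G : SimpleGraph V) (S : Set V) (hS : IsConvexSet G S)
    (X : Set V) (hX : TotalVis G X) :
    TotalVis (G.induce S) (Subtype.val ⁻¹' X : Set S) :=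
  fun u v => (hX u v).induce_of_isConvexSet hS u.2 v.2
end

section
/- A subset X of the vertices of the Petersen graph P is an outer mutual-visibility set of P if and only if X is an independent set of P. -/
open SimpleGraph

variable {V : Type*}

/-- The Petersen graph as the Kneser graph K(5,2). -/
def petersen : SimpleGraph {s : Finset (Fin 5) // s.card = 2} where
  Adj s t := Disjoint s.val t.val
  symm := ⟨fun _ _ h => h.symm⟩
  loopless := ⟨fun s h => by
    have h0 : s.val = ∅ := disjoint_self.mp h
    have h2 := s.2
    rw [h0] at h2
    simp at h2⟩

/-!
In the Petersen graph every two distinct non-adjacent vertices have exactly one common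
neighbour, and adjacent vertices have none. Hence visibility between vertices at distance two
is decided by a single vertex. If `X` is independent, the middle vertex of a shortest path
starting in `X` is a neighbour of a vertex of `X`, so it lies outside `X`. Conversely, if
`u, v ∈ X` are adjacent, take a third neighbour `c` of `v`: the only shortest `u,c`-path runs
through `v ∈ X`, whether `c` lies in `X` or not.
-/

variable {G : SimpleGraph V} {X : Set V} {u v w : V}

namespace SimpleGraph

lemma dist_eq_two_of_adj_of_adj (huw : G.Adj u w) (hwv : G.Adj w v) (hne : u ≠ v)
    (hnadj : ¬ G.Adj u v) : G.dist u v = 2 := by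
  rw [dist, ENat.toNat_eq_iff two_ne_zero]
  exact edist_eq_two_iff.mpr ⟨hne, hnadj, w, huw, hwv.symm⟩

end SimpleGraph

lemma outerVis_iff : OuterVis G X ↔ ∀ ⦃u⦄, u ∈ X → ∀ v, XVisible G X u v := by
  refine ⟨fun h u hu v => ?_, fun h => ⟨fun u hu v _ => h hu v, fun u hu v _ => h hu v⟩⟩
  by_cases hv : v ∈ X
  exacts [h.1 hu hv, h.2 hu hv]

lemma xVisible_self (G : SimpleGraph V) (X : Set V) (u : V) : XVisible G X u u :=
  ⟨.nil, by simp, fun w hw hwu _ => absurd (by simpa using hw) hwu⟩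

lemma xVisible_of_adj (h : G.Adj u v) : XVisible G X u v := by
  refine ⟨.cons h .nil, by simp [dist_eq_one_iff_adj.mpr h], fun w hw hwu hwv => ?_⟩
  simp only [Walk.support_cons, Walk.support_nil, List.mem_cons, List.not_mem_nil,
    or_false] at hw
  rcases hw with rfl | rfl <;> contradiction

lemma xVisible_of_adj_of_adj (huw : G.Adj u w) (hwv : G.Adj w v) (hne : u ≠ v)
    (hnadj : ¬ G.Adj u v) (hw : w ∉ X) : XVisible G X u v := by
  refine ⟨.cons huw (.cons hwv .nil), ?_, fun x hx hxu hxv => ?_⟩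
  · simp [dist_eq_two_of_adj_of_adj huw hwv hne hnadj]
  · simp only [Walk.support_cons, Walk.support_nil, List.mem_cons, List.not_mem_nil,
      or_false] at hx
    rcases hx with rfl | rfl | rfl
    exacts [absurd rfl hxu, hw, absurd rfl hxv]

lemma XVisible.exists_adj_adj_notMem (h : XVisible G X u v) (hd : G.dist u v = 2) :
    ∃ w, G.Adj u w ∧ G.Adj w v ∧ w ∉ X := by
  obtain ⟨p, hp, hint⟩ := h
  rw [hd] at hp
  have huw : G.Adj u (p.getVert 1) := by
    simpa using p.adj_getVert_succ (i := 0) (by omega)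
  have hwv : G.Adj (p.getVert 1) v := by
    have h := p.adj_getVert_succ (i := 1) (by omega)
    rwa [show 1 + 1 = p.length by omega, Walk.getVert_length] at h
  exact ⟨_, huw, hwv, hint _ (p.getVert_mem_support 1) huw.ne' hwv.ne⟩

lemma not_xVisible_of_unique_commonNeighbor (huw : G.Adj u w) (hwv : G.Adj w v)
    (hne : u ≠ v) (hnadj : ¬ G.Adj u v) (huniq : ∀ w', G.Adj u w' → G.Adj w' v → w = w')
    (hw : w ∈ X) : ¬ XVisible G X u v := fun h => by
  obtain ⟨w', huw', hw'v, hw'⟩ :=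
    h.exists_adj_adj_notMem (dist_eq_two_of_adj_of_adj huw hwv hne hnadj)
  exact hw' (huniq w' huw' hw'v ▸ hw)

instance : DecidableRel petersen.Adj := fun s t =>
  inferInstanceAs (Decidable (Disjoint s.val t.val))

lemma petersen_exists_adj_adj :
    ∀ u v : {s : Finset (Fin 5) // s.card = 2}, u ≠ v → ¬ petersen.Adj u v →
    ∃ w, petersen.Adj u w ∧ petersen.Adj w v := by
  decide

lemma petersen_commonNeighbor_unique :
    ∀ u v w w' : {s : Finset (Fin 5) // s.card = 2}, u ≠ v →
      petersen.Adj u w → petersen.Adj w v → petersen.Adj u w' → petersen.Adj w' v → w = w' := by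
  decide

lemma petersen_not_adj_of_adj_of_adj : ∀ u v w : {s : Finset (Fin 5) // s.card = 2},
    petersen.Adj u v → petersen.Adj v w → ¬ petersen.Adj u w := by
  decide

lemma petersen_exists_adj_ne :
    ∀ u v : {s : Finset (Fin 5) // s.card = 2}, ∃ w, petersen.Adj v w ∧ w ≠ u := by
  decide

theorem stmt_11 (X : Set {s : Finset (Fin 5) // s.card = 2}) :
    OuterVis petersen X ↔ X.Pairwise (fun u v => ¬ petersen.Adj u v) := by
  rw [outerVis_iff]
  constructor
  · intro hvis u hu v hv _ huv
    obtain ⟨c, hvc, hcu⟩ := petersen_exists_adj_ne u v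
    exact not_xVisible_of_unique_commonNeighbor huv hvc hcu.symm
      (petersen_not_adj_of_adj_of_adj u v c huv hvc)
      (petersen_commonNeighbor_unique u c v · hcu.symm huv hvc) hv (hvis hu c)
  · intro hind u hu v
    by_cases hne : u = v
    · exact hne ▸ xVisible_self petersen X u
    by_cases hadj : petersen.Adj u v
    · exact xVisible_of_adj hadj
    obtain ⟨w, huw, hwv⟩ := petersen_exists_adj_adj u v hne hadj
    exact xVisible_of_adj_of_adj huw hwv hne hadj fun hw => hind hu hw huw.ne huw
end

section
/- Let X be a nonempty vertex set of a graph G such that every proper subset of X is a total mutual-visibility set of G. Then X is not a total mutual-visibility set if and only if there exist nonadjacent vertices v1 and v2 with N_G(v1) ∩ N_G(v2) = X. -/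
open SimpleGraph

variable {V : Type*}

/-!
Take a pair `u, v` that is not `X`-visible, at minimum distance. For `x ∈ X`, the set `X \ {x}`
is total, so some shortest `u,v`-path has no internal vertex in `X \ {x}`. Its second vertex is
in `X`, since otherwise minimality would make `u, v` visible through it; hence it is `x`, and
symmetrically so is its second-to-last vertex. So every `x ∈ X` is a common neighbour of the
nonadjacent `u, v`, which are then at distance `2`, and a common neighbour outside `X` would make
them `X`-visible. Conversely, if `N(v₁) ∩ N(v₂) = X ≠ ∅` with `v₁, v₂` nonadjacent, every
shortest `v₁,v₂`-path has its middle vertex in `X`.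
-/

namespace XVisible

variable {G : SimpleGraph V} {X : Set V} {u v w : V}

lemma refl (G : SimpleGraph V) (X : Set V) (u : V) : XVisible G X u u :=
  ⟨.nil, by simp, by simp⟩

lemma of_adj (X : Set V) (h : G.Adj u v) : XVisible G X u v := by
  refine ⟨.cons h .nil, by simpa using (dist_eq_one_iff_adj.mpr h).symm, ?_⟩
  intro w hw hwu hwv
  simp only [Walk.support_cons, Walk.support_nil, List.mem_cons, List.not_mem_nil] at hw
  grind

lemma symm (h : XVisible G X u v) : XVisible G X v u := by
  obtain ⟨p, hlen, hint⟩ := h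
  exact ⟨p.reverse, by simpa [dist_comm] using hlen,
    fun w hw hwv hwu ↦ hint w (by simpa using hw) hwu hwv⟩

lemma cons (h : G.Adj u w) (hwX : w ∉ X) (hwv : XVisible G X w v)
    (hd : G.dist u v = G.dist w v + 1) : XVisible G X u v := by
  obtain ⟨p, hlen, hint⟩ := hwv
  refine ⟨.cons h p, by simp [hlen, hd], ?_⟩
  intro z hz hzu hzv
  rw [Walk.support_cons, List.mem_cons] at hz
  rcases hz with rfl | hz
  · exact absurd rfl hzu
  · rcases eq_or_ne z w with rfl | hzw
    · exact hwX
    · exact hint z hz hzw hzv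

end XVisible

section

variable {G : SimpleGraph V} {X : Set V} {u v w : V}

lemma dist_eq_two_of_mem_commonNeighbors (huv : u ≠ v) (hnadj : ¬ G.Adj u v)
    (hw : w ∈ G.commonNeighbors u v) : G.dist u v = 2 := by
  simp [SimpleGraph.dist, edist_eq_two_iff.mpr ⟨huv, hnadj, w, hw⟩]

lemma xVisible_iff_of_dist_eq_two (hd : G.dist u v = 2) :
    XVisible G X u v ↔ ∃ w ∈ G.commonNeighbors u v, w ∉ X := by
  constructor
  · rintro ⟨p, hlen, hint⟩
    rw [hd] at hlen
    rcases p with _ | ⟨h₁, _ | ⟨h₂, _ | ⟨_, _⟩⟩⟩ <;> simp only [Walk.length_cons,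
      Walk.length_nil] at hlen <;> try omega
    exact ⟨_, ⟨h₁, h₂.symm⟩, hint _ (by simp) h₁.ne' h₂.ne⟩
  · rintro ⟨w, hw, hwX⟩
    obtain ⟨huw, hvw⟩ := (G.mem_commonNeighbors).mp hw
    refine ⟨.cons huw (.cons hvw.symm .nil), by simp [hd], ?_⟩
    intro z hz hzu hzv
    simp only [Walk.support_cons, Walk.support_nil, List.mem_cons, List.not_mem_nil] at hz
    grind

def IsMinInvisiblePair (G : SimpleGraph V) (X : Set V) (u v : V) : Prop :=
  ¬ XVisible G X u v ∧ ∀ a b, G.dist a b < G.dist u v → XVisible G X a b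

lemma exists_isMinInvisiblePair (h : ¬ TotalVis G X) :
    ∃ u v, IsMinInvisiblePair G X u v := by
  classical
  simp only [TotalVis, not_forall] at h
  obtain ⟨u₀, v₀, h₀⟩ := h
  have hex : ∃ n, ∃ u v, ¬ XVisible G X u v ∧ G.dist u v = n := ⟨_, u₀, v₀, h₀, rfl⟩
  obtain ⟨u, v, hnv, hd⟩ := Nat.find_spec hex
  refine ⟨u, v, hnv, fun a b hab ↦ ?_⟩
  by_contra hab'
  exact Nat.find_min hex (hd ▸ hab) ⟨a, b, hab', rfl⟩

namespace IsMinInvisiblePair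

lemma symm (h : IsMinInvisiblePair G X u v) : IsMinInvisiblePair G X v u :=
  ⟨fun hvu ↦ h.1 hvu.symm, fun a b hab ↦ h.2 a b (by rwa [dist_comm (u := v)] at hab)⟩

lemma ne (h : IsMinInvisiblePair G X u v) : u ≠ v := by
  rintro rfl
  exact h.1 (.refl G X u)

lemma not_adj (h : IsMinInvisiblePair G X u v) : ¬ G.Adj u v :=
  fun huv ↦ h.1 (.of_adj X huv)

lemma adj_of_xVisible_sdiff (h : IsMinInvisiblePair G X u v) {x : V}
    (hx : XVisible G (X \ {x}) u v) : G.Adj u x := by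
  obtain ⟨p, hlen, hint⟩ := hx
  cases p with
  | nil => exact absurd rfl h.ne
  | @cons _ w _ huw q =>
    have hwv : w ≠ v := by
      rintro rfl
      exact h.not_adj huw
    have hq : G.dist w v ≤ q.length := dist_le q
    have hcons : G.dist u v ≤ G.dist w v + 1 := by
      obtain ⟨r, hr⟩ := q.reachable.exists_walk_length_eq_dist
      simpa [hr] using dist_le (.cons huw r)
    rw [Walk.length_cons] at hlen
    have hwX : w ∈ X := by
      by_contra hwX
      exact h.1 (.cons huw hwX (h.2 w v (by omega)) (by omega))
    have hw := hint w (by simp) huw.ne' hwv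
    rw [Set.mem_sdiff, Set.mem_singleton_iff, not_and_not_right] at hw
    exact hw hwX ▸ huw

lemma mem_commonNeighbors_of_xVisible_sdiff (h : IsMinInvisiblePair G X u v) {x : V}
    (hx : XVisible G (X \ {x}) u v) : x ∈ G.commonNeighbors u v :=
  ⟨h.adj_of_xVisible_sdiff hx, h.symm.adj_of_xVisible_sdiff hx.symm⟩

end IsMinInvisiblePair

end

theorem stmt_16_general (G : SimpleGraph V) (X : Set V)
    (hne : X.Nonempty) (hsub : ∀ Y : Set V, Y ⊂ X → TotalVis G Y) :
    ¬ TotalVis G X ↔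
      ∃ v₁ v₂ : V, v₁ ≠ v₂ ∧ ¬ G.Adj v₁ v₂ ∧
        G.neighborSet v₁ ∩ G.neighborSet v₂ = X := by
  obtain ⟨x₀, hx₀⟩ := hne
  constructor
  · intro hX
    obtain ⟨u, v, huv⟩ := exists_isMinInvisiblePair hX
    have hcommon : ∀ x ∈ X, x ∈ G.commonNeighbors u v := fun x hx ↦
      huv.mem_commonNeighbors_of_xVisible_sdiff
        (hsub (X \ {x}) (Set.sdiff_singleton_ssubset.mpr hx) u v)
    have hd := dist_eq_two_of_mem_commonNeighbors huv.ne huv.not_adj (hcommon x₀ hx₀)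
    refine ⟨u, v, huv.ne, huv.not_adj, subset_antisymm (fun w hw ↦ ?_) hcommon⟩
    by_contra hwX
    exact huv.1 ((xVisible_iff_of_dist_eq_two hd).mpr ⟨w, hw, hwX⟩)
  · rintro ⟨v₁, v₂, hne, hnadj, hX⟩ hTV
    have hd := dist_eq_two_of_mem_commonNeighbors hne hnadj (hX ▸ hx₀)
    obtain ⟨w, hw, hwX⟩ := (xVisible_iff_of_dist_eq_two hd).mp (hTV v₁ v₂)
    exact hwX (hX ▸ hw)

theorem stmt_16 (G : SimpleGraph V) (hG : G.Connected) (X : Set V)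
    (hne : X.Nonempty) (hsub : ∀ Y : Set V, Y ⊂ X → TotalVis G Y) :
    ¬ TotalVis G X ↔
      ∃ v₁ v₂ : V, v₁ ≠ v₂ ∧ ¬ G.Adj v₁ v₂ ∧
        G.neighborSet v₁ ∩ G.neighborSet v₂ = X :=
  stmt_16_general G X hne hsub
end
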